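/- arXiv:2306.08559 — 9 statements merged into one kernel-verified Lean document; each statement's English description precedes it below -/
import Mathlib

section
/- Let P be a real symmetric idempotent n×n matrix and suppose that for some constant C ≤ 1 the largest eigenvalue of every diagonal block P_{[g,g]} is at most C. Then Σ_{g≠h} tr(P_{[g,h]} P_{[h,g]}) ≥ (1 − C)·tr(P). -/
open Matrix BigOperators

/-- Index set of `n = n₁ + … + n_G` observations, grouped into `G` clusters. -/
abbrev ClusterIdx {G : ℕ} (ng : Fin G → ℕ) := Σ g : Fin G, Fin (ng g)

/-- The submatrix `A_{[g,h]}`: rows in cluster `g`, columns in cluster `h`. -/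
def clusterSub {G : ℕ} {ng : Fin G → ℕ} (A : Matrix (ClusterIdx ng) (ClusterIdx ng) ℝ)
    (g h : Fin G) : Matrix (Fin (ng g)) (Fin (ng h)) ℝ :=
  Matrix.of fun i j => A ⟨g, i⟩ ⟨h, j⟩

/-!
Since `P = P * P`, expanding the trace blockwise gives `tr P = ∑_{g,h} tr(P_{[g,h]} P_{[h,g]})`,
so the off-diagonal sum is `tr P - ∑_g tr(P_{[g,g]}²)`. Each diagonal block is a compression of
the positive semidefinite `P`, so its eigenvalues `λ` lie in `[0, C]`; hence
`tr(P_{[g,g]}²) = ∑ λ² ≤ C ∑ λ = C tr P_{[g,g]}`, and `∑_g tr P_{[g,g]} = tr P`.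
-/

open scoped ComplexOrder

theorem Fintype.sum_sum_ite_eq_sub_sum_diag {α M : Type*} [Fintype α] [DecidableEq α] [AddCommGroup M]
    (f : α → α → M) :
    ∑ a, ∑ b, (if a = b then 0 else f a b) = ∑ a, ∑ b, f a b - ∑ a, f a a := by
  rw [← Finset.sum_sub_distrib]
  refine Finset.sum_congr rfl fun a _ => ?_
  simp [Finset.sum_ite, Finset.filter_ne, Finset.sum_erase_eq_sub]

namespace Matrix

section Sigma

variable {α R : Type*} {ι : α → Type*} [Fintype α] [∀ a, Fintype (ι a)]

theorem trace_eq_sum_trace_submatrix_sigma [AddCommMonoid R]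
    (A : Matrix (Σ a, ι a) (Σ a, ι a) R) :
    A.trace = ∑ a, (A.submatrix (Sigma.mk a) (Sigma.mk a)).trace := by
  simp only [trace, ← Finset.univ_sigma_univ, Finset.sum_sigma]
  rfl

theorem trace_mul_eq_sum_sum_trace_submatrix_sigma [NonUnitalNonAssocSemiring R]
    (A B : Matrix (Σ a, ι a) (Σ a, ι a) R) :
    (A * B).trace = ∑ a, ∑ b,
      (A.submatrix (Sigma.mk a) (Sigma.mk b) * B.submatrix (Sigma.mk b) (Sigma.mk a)).trace := by
  simp only [trace, diag, mul_apply, submatrix_apply, ← Finset.univ_sigma_univ, Finset.sum_sigma]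
  exact Finset.sum_congr rfl fun a _ => Finset.sum_comm

end Sigma

variable {n 𝕜 : Type*} [Fintype n] [RCLike 𝕜] {A : Matrix n n 𝕜}

theorem IsHermitian.posSemidef_of_mul_self_eq (hA : A.IsHermitian) (h : A * A = A) :
    A.PosSemidef := by
  simpa [hA.eq, h] using posSemidef_conjTranspose_mul_self A

theorem IsHermitian.trace_mul_self_eq_sum_sq [DecidableEq n] (hA : A.IsHermitian) :
    (A * A).trace = ∑ i, ((hA.eigenvalues i ^ 2 : ℝ) : 𝕜) := by
  conv_lhs => rw [hA.spectral_theorem, ← map_mul, Unitary.conjStarAlgAut_apply, trace_mul_cycle,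
    Unitary.coe_star_mul_self, one_mul, diagonal_mul_diagonal, trace_diagonal]
  simp [sq]

theorem PosSemidef.re_trace_mul_self_le [DecidableEq n] {C : ℝ} (hA : A.PosSemidef)
    (hC : ∀ i, hA.isHermitian.eigenvalues i ≤ C) :
    RCLike.re (A * A).trace ≤ C * RCLike.re A.trace := by
  rw [hA.isHermitian.trace_mul_self_eq_sum_sq, hA.isHermitian.trace_eq_sum_eigenvalues]
  simp only [map_sum, RCLike.ofReal_re, Finset.mul_sum]
  gcongr with i
  nlinarith [hA.eigenvalues_nonneg i, hC i]

end Matrix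

theorem clusterSub_eq_submatrix {G : ℕ} {ng : Fin G → ℕ}
    (A : Matrix (ClusterIdx ng) (ClusterIdx ng) ℝ) (g h : Fin G) :
    clusterSub A g h = A.submatrix (Sigma.mk g) (Sigma.mk h) :=
  rfl

theorem sum_offdiag_trace_ge_general
    {G : ℕ} (ng : Fin G → ℕ)
    (P : Matrix (ClusterIdx ng) (ClusterIdx ng) ℝ)
    (hPsymm : P.IsSymm) (hPidem : P * P = P)
    (C : ℝ)
    (hblock : ∀ g : Fin G, (clusterSub P g g).IsHermitian)
    (hCbound : ∀ (g : Fin G) (i : Fin (ng g)), (hblock g).eigenvalues i ≤ C) :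
    (1 - C) * P.trace ≤
      ∑ g : Fin G, ∑ h : Fin G, if g = h then 0 else
        (clusterSub P g h * clusterSub P h g).trace := by
  have hP : P.PosSemidef :=
    (isHermitian_iff_isSymm.mpr hPsymm).posSemidef_of_mul_self_eq hPidem
  have hdiag (g : Fin G) :
      (clusterSub P g g * clusterSub P g g).trace ≤ C * (clusterSub P g g).trace :=
    (hP.submatrix (Sigma.mk g)).re_trace_mul_self_le (hCbound g)
  calc (1 - C) * P.trace
      = (P * P).trace - C * ∑ g, (clusterSub P g g).trace := by
        rw [hPidem, trace_eq_sum_trace_submatrix_sigma P]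
        simp only [clusterSub_eq_submatrix]
        ring
    _ ≤ (P * P).trace - ∑ g, (clusterSub P g g * clusterSub P g g).trace := by
        rw [Finset.mul_sum]
        gcongr with g
        exact hdiag g
    _ = _ := by
        rw [trace_mul_eq_sum_sum_trace_submatrix_sigma, Fintype.sum_sum_ite_eq_sub_sum_diag]
        simp only [clusterSub_eq_submatrix]

/-- lower bound on `∑_{g≠h} tr(P_{[g,h]} P_{[h,g]})`, proof of Theorem 2:
if `P` is symmetric idempotent and every diagonal block `P_{[g,g]}` has all eigenvalues
at most `C ≤ 1`, then `∑_{g≠h} tr(P_{[g,h]} P_{[h,g]}) ≥ (1 - C) · tr(P)`. -/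
theorem sum_offdiag_trace_ge
    {G : ℕ} (ng : Fin G → ℕ)
    (P : Matrix (ClusterIdx ng) (ClusterIdx ng) ℝ)
    (hPsymm : P.IsSymm) (hPidem : P * P = P)
    (C : ℝ) (hC1 : C ≤ 1)
    (hblock : ∀ g : Fin G, (clusterSub P g g).IsHermitian)
    (hCbound : ∀ (g : Fin G) (i : Fin (ng g)), (hblock g).eigenvalues i ≤ C) :
    (1 - C) * P.trace ≤
      ∑ g : Fin G, ∑ h : Fin G, if g = h then 0 else
        (clusterSub P g h * clusterSub P h g).trace :=
  sum_offdiag_trace_ge_general ng P hPsymm hPidem C hblock hCbound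
end

section
/- Let Z be a fixed real n×k matrix, Π ∈ R^k, and for g = 1,…,G let (ε_{[g]}, η_{[g]}) be pairs of random vectors in R^{n_g}, independent across g, each component with mean zero and finite second moments; set Σ_g = E[ε_{[g]}ε_{[g]}ᵀ], Ω_g = E[η_{[g]}η_{[g]}ᵀ], Ξ_g = E[η_{[g]}ε_{[g]}ᵀ], let Σ be the block-diagonal matrix with blocks Σ_g, and define x = ZΠ + η ∈ R^n. Let P be a real symmetric n×n matrix and P̈ = P − B_P. Then E[xᵀP̈ε] = 0 and Var(xᵀP̈ε) = ΠᵀZᵀP̈ΣP̈ZΠ + Σ_{g≠h} [ tr(Ω_g P_{[g,h]} Σ_h P_{[h,g]}) + tr(Ξ_gᵀ P_{[g,h]} Ξ_hᵀ P_{[h,g]}) ]. -/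
open Matrix MeasureTheory ProbabilityTheory BigOperators

/-- The block-diagonal part `B_A` of a matrix. -/
def blockDiagPart {G : ℕ} {ng : Fin G → ℕ} (A : Matrix (ClusterIdx ng) (ClusterIdx ng) ℝ) :
    Matrix (ClusterIdx ng) (ClusterIdx ng) ℝ :=
  Matrix.of fun x y => if x.1 = y.1 then A x y else 0

/-- The cluster-`g` subvector `v_{[g]}` of a vector. -/
def clusterVec {G : ℕ} {ng : Fin G → ℕ} (v : ClusterIdx ng → ℝ) (g : Fin G) :
    Fin (ng g) → ℝ := fun i => v ⟨g, i⟩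

/-- The covariance block `E[a_{[g]} b_{[g]}ᵀ]` of two random vectors. -/
noncomputable def covBlock2 {Ω : Type*} [MeasurableSpace Ω] (μ : Measure Ω)
    {G : ℕ} {ng : Fin G → ℕ} (a b : Ω → ClusterIdx ng → ℝ) (g : Fin G) :
    Matrix (Fin (ng g)) (Fin (ng g)) ℝ :=
  Matrix.of fun i j => ∫ ω, a ω ⟨g, i⟩ * b ω ⟨g, j⟩ ∂μ

/-- The `n × n` block-diagonal covariance matrix `Σ` with blocks `Σ_g = E[ε_{[g]} ε_{[g]}ᵀ]`. -/
noncomputable def covMatrix {Ω : Type*} [MeasurableSpace Ω] (μ : Measure Ω)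
    {G : ℕ} {ng : Fin G → ℕ} (ε : Ω → ClusterIdx ng → ℝ) :
    Matrix (ClusterIdx ng) (ClusterIdx ng) ℝ :=
  Matrix.of fun x y => if x.1 = y.1 then ∫ ω, ε ω x * ε ω y ∂μ else 0

/-!
Write the score as `∑_{x,y} Q x y * (c x + η x) * ε y` with `c = ZΠ` and `Q = P̈`. Since `Q`
vanishes on the diagonal blocks, every term pairs two observations from distinct clusters.
Expectations of products of coordinates factor over the independent cluster σ-algebras, so a
product vanishes as soon as some cluster contributes a single mean-zero factor. Hence every term
has mean zero; in the second moment the third-order terms vanish, and the fourth-order term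
`E[η_x ε_y η_x' ε_y']` survives only when the clusters of `(x, y)` and `(x', y')` agree or are
swapped, which gives `E[η_x η_x'] E[ε_y ε_y'] + E[η_x ε_y'] E[η_x' ε_y]`. Summed against
`Q x y * Q x' y'` these give the quadratic form and two traces, and the traces split into cluster
blocks because all second-moment matrices are block diagonal.
-/

namespace ProbabilityTheory
variable {Ω ι : Type*} {mΩ : MeasurableSpace Ω} {μ : Measure Ω}
  {m : ι → MeasurableSpace Ω}

theorem iIndep.indepFun_of_disjoint (hle : ∀ i, m i ≤ mΩ) (hind : iIndep m μ)
    {S T : Set ι} (hST : Disjoint S T) {X Y : Ω → ℝ}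
    (hX : Measurable[⨆ i ∈ S, m i] X) (hY : Measurable[⨆ i ∈ T, m i] Y) :
    IndepFun X Y μ := by
  rw [IndepFun_iff_Indep]
  exact indep_of_indep_of_le (indep_iSup_of_disjoint hle hind hST) hX.comap_le hY.comap_le

theorem iIndep.integral_mul_of_disjoint (hle : ∀ i, m i ≤ mΩ) (hind : iIndep m μ)
    {S T : Set ι} (hST : Disjoint S T) {X Y : Ω → ℝ}
    (hX : Measurable[⨆ i ∈ S, m i] X) (hY : Measurable[⨆ i ∈ T, m i] Y) :
    ∫ ω, X ω * Y ω ∂μ = (∫ ω, X ω ∂μ) * ∫ ω, Y ω ∂μ :=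
  (hind.indepFun_of_disjoint hle hST hX hY).integral_fun_mul_eq_mul_integral
    (hX.mono (iSup₂_le fun i _ => hle i) le_rfl).aestronglyMeasurable
    (hY.mono (iSup₂_le fun i _ => hle i) le_rfl).aestronglyMeasurable

end ProbabilityTheory

section QuadraticSums
variable {ι : Type*} [Fintype ι]

theorem sum_mul_mul_eq_dotProduct_mulVec (Q M : Matrix ι ι ℝ) (c : ι → ℝ) :
    ∑ x, ∑ y, ∑ x', ∑ y', Q x y * Q x' y' * (c x * c x' * M y y') =
      c ⬝ᵥ (Q * M * Qᵀ) *ᵥ c := by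
  simp only [dotProduct, mulVec, mul_apply, transpose_apply, Finset.sum_mul, Finset.mul_sum]
  refine Finset.sum_congr rfl fun x _ => ?_
  rw [Finset.sum_comm]
  refine Finset.sum_congr rfl fun x' _ => ?_
  rw [Finset.sum_comm]
  refine Finset.sum_congr rfl fun y' _ => Finset.sum_congr rfl fun y _ => ?_
  ring

theorem sum_mul_mul_eq_trace (Q A B : Matrix ι ι ℝ) :
    ∑ x, ∑ y, ∑ x', ∑ y', Q x y * Q x' y' * (A x x' * B y y') =
      (A * Q * Bᵀ * Qᵀ).trace := by
  simp only [trace, diag, mul_apply, transpose_apply, Finset.sum_mul]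
  refine Finset.sum_congr rfl fun x _ => Finset.sum_congr rfl fun y _ => ?_
  rw [Finset.sum_comm]
  refine Finset.sum_congr rfl fun y' _ => Finset.sum_congr rfl fun x' _ => ?_
  ring

theorem sum_mul_mul_swap_eq_trace (Q K : Matrix ι ι ℝ) :
    ∑ x, ∑ y, ∑ x', ∑ y', Q x y * Q x' y' * (K x y' * K x' y) =
      (Kᵀ * Q * Kᵀ * Q).trace := by
  have hcycle : (Kᵀ * Q * Kᵀ * Q).trace = (K * Qᵀ * K * Qᵀ).trace := by
    rw [← trace_transpose]
    simp only [transpose_mul, transpose_transpose, Matrix.mul_assoc]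
    rw [trace_mul_comm, Matrix.mul_assoc, Matrix.mul_assoc]
  rw [hcycle]
  simp only [trace, diag, mul_apply, transpose_apply, Finset.sum_mul]
  refine Finset.sum_congr rfl fun x _ => Finset.sum_congr rfl fun y _ =>
    Finset.sum_congr rfl fun x' _ => Finset.sum_congr rfl fun y' _ => ?_
  ring

end QuadraticSums

section Blocks
variable {G : ℕ} {ng : Fin G → ℕ}

theorem sum_ite_fst_eq (x : ClusterIdx ng) (f : ClusterIdx ng → ℝ) :
    ∑ y : ClusterIdx ng, (if x.1 = y.1 then f y else 0) = ∑ j, f ⟨x.1, j⟩ := by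
  rw [Fintype.sum_sigma,
    Finset.sum_eq_single x.1 (fun h _ hh => by simp [Ne.symm hh]) (by simp)]
  simp

theorem blockDiagPart_mul_apply (A B : Matrix (ClusterIdx ng) (ClusterIdx ng) ℝ)
    (x y : ClusterIdx ng) :
    (blockDiagPart A * B) x y = ∑ j, A x ⟨x.1, j⟩ * B ⟨x.1, j⟩ y := by
  simp only [mul_apply, blockDiagPart, of_apply, ite_mul, zero_mul, sum_ite_fst_eq]

theorem mul_blockDiagPart_apply (A B : Matrix (ClusterIdx ng) (ClusterIdx ng) ℝ)
    (x y : ClusterIdx ng) :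
    (A * blockDiagPart B) x y = ∑ j, A x ⟨y.1, j⟩ * B ⟨y.1, j⟩ y := by
  simp only [mul_apply, blockDiagPart, of_apply, mul_ite, mul_zero]
  simp only [eq_comm (a := (_ : ClusterIdx ng).1) (b := y.1), sum_ite_fst_eq]

theorem trace_mul_mul_mul_of_blockDiagPart_eq
    {A B : Matrix (ClusterIdx ng) (ClusterIdx ng) ℝ} (hA : blockDiagPart A = A)
    (hB : blockDiagPart B = B) (X Y : Matrix (ClusterIdx ng) (ClusterIdx ng) ℝ) :
    (A * X * B * Y).trace =
      ∑ g, ∑ h,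
        (clusterSub A g g * clusterSub X g h * clusterSub B h h * clusterSub Y h g).trace := by
  conv_lhs => rw [← hA, ← hB]
  simp only [trace, diag, mul_apply (M := blockDiagPart A * X * blockDiagPart B),
    mul_blockDiagPart_apply, blockDiagPart_mul_apply, Fintype.sum_sigma]
  simp only [mul_apply, clusterSub, of_apply]
  exact Finset.sum_congr rfl fun g _ => Finset.sum_comm

theorem blockDiagPart_transpose (A : Matrix (ClusterIdx ng) (ClusterIdx ng) ℝ) :
    (blockDiagPart A)ᵀ = blockDiagPart Aᵀ := by
  ext x y
  simp [blockDiagPart, eq_comm]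

theorem sub_blockDiagPart_apply_of_fst_eq (A : Matrix (ClusterIdx ng) (ClusterIdx ng) ℝ)
    {x y : ClusterIdx ng} (hxy : x.1 = y.1) : (A - blockDiagPart A) x y = 0 := by
  simp [blockDiagPart, hxy]

theorem Matrix.IsSymm.sub_blockDiagPart {A : Matrix (ClusterIdx ng) (ClusterIdx ng) ℝ}
    (hA : A.IsSymm) : (A - blockDiagPart A).IsSymm := by
  ext x y
  simp [blockDiagPart, eq_comm, hA.apply x y]

theorem clusterSub_transpose (A : Matrix (ClusterIdx ng) (ClusterIdx ng) ℝ) (g h : Fin G) :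
    clusterSub Aᵀ g h = (clusterSub A h g)ᵀ := rfl

theorem clusterSub_sub_blockDiagPart_self (A : Matrix (ClusterIdx ng) (ClusterIdx ng) ℝ)
    (g : Fin G) : clusterSub (A - blockDiagPart A) g g = 0 := by
  ext i j
  simp [clusterSub, blockDiagPart]

theorem clusterSub_sub_blockDiagPart_of_ne (A : Matrix (ClusterIdx ng) (ClusterIdx ng) ℝ)
    {g h : Fin G} (hgh : g ≠ h) : clusterSub (A - blockDiagPart A) g h = clusterSub A g h := by
  ext i j
  simp [clusterSub, blockDiagPart, hgh]

theorem trace_mul_clusterSub_sub_blockDiagPart (P A B : Matrix (ClusterIdx ng) (ClusterIdx ng) ℝ)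
    (g h : Fin G) :
    (clusterSub A g g * clusterSub (P - blockDiagPart P) g h * clusterSub B h h *
        clusterSub (P - blockDiagPart P) h g).trace =
      if g = h then 0
      else (clusterSub A g g * clusterSub P g h * clusterSub B h h * clusterSub P h g).trace := by
  split_ifs with hgh
  · subst hgh
    simp [clusterSub_sub_blockDiagPart_self]
  · rw [clusterSub_sub_blockDiagPart_of_ne P hgh,
      clusterSub_sub_blockDiagPart_of_ne P (Ne.symm hgh)]

end Blocks

section MomentMatrix
variable {Ω ι : Type*} [MeasurableSpace Ω] (μ : Measure Ω)

noncomputable def momentMatrix (u v : Ω → ι → ℝ) : Matrix ι ι ℝ :=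
  of fun x y => ∫ ω, u ω x * v ω y ∂μ

@[simp]
theorem momentMatrix_apply (u v : Ω → ι → ℝ) (x y : ι) :
    momentMatrix μ u v x y = ∫ ω, u ω x * v ω y ∂μ := rfl

theorem momentMatrix_transpose (u v : Ω → ι → ℝ) :
    (momentMatrix μ u v)ᵀ = momentMatrix μ v u := by
  ext x y
  simp only [transpose_apply, momentMatrix_apply, mul_comm]

theorem clusterSub_momentMatrix_self {G : ℕ} {ng : Fin G → ℕ}
    (u v : Ω → ClusterIdx ng → ℝ) (g : Fin G) : clusterSub (momentMatrix μ u v) g g = covBlock2 μ u v g := rfl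

end MomentMatrix

section ClusterMoments
variable {Ω : Type*} {mΩ : MeasurableSpace Ω} {μ : Measure Ω} {G : ℕ} {ng : Fin G → ℕ}
  {m : Fin G → MeasurableSpace Ω} {u v w : Ω → ClusterIdx ng → ℝ}

def IsClusterAdapted (m : Fin G → MeasurableSpace Ω) (u : Ω → ClusterIdx ng → ℝ) : Prop :=
  ∀ x : ClusterIdx ng, Measurable[m x.1] fun ω => u ω x

theorem IsClusterAdapted.measurable_iSup (hu : IsClusterAdapted m u) {S : Set (Fin G)}
    {x : ClusterIdx ng} (hx : x.1 ∈ S) : Measurable[⨆ g ∈ S, m g] fun ω => u ω x :=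
  (hu x).mono (le_iSup₂ (f := fun g (_ : g ∈ S) => m g) x.1 hx) le_rfl

variable (hle : ∀ g, m g ≤ mΩ) (hind : iIndep m μ)
include hle hind

theorem integral_mul_eq_zero_of_notMem {S : Set (Fin G)} {X : Ω → ℝ}
    (hX : Measurable[⨆ g ∈ S, m g] X) (hv : IsClusterAdapted m v) {y : ClusterIdx ng}
    (hy : y.1 ∉ S) (hv0 : ∫ ω, v ω y ∂μ = 0) : ∫ ω, X ω * v ω y ∂μ = 0 := by
  rw [hind.integral_mul_of_disjoint hle (Set.disjoint_singleton_right.2 hy) hX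
    (hv.measurable_iSup (Set.mem_singleton _)), hv0, mul_zero]

theorem integral_mul_eq_zero_of_fst_ne (hu : IsClusterAdapted m u) (hv : IsClusterAdapted m v)
    {x y : ClusterIdx ng} (hxy : x.1 ≠ y.1) (hv0 : ∫ ω, v ω y ∂μ = 0) :
    ∫ ω, u ω x * v ω y ∂μ = 0 :=
  integral_mul_eq_zero_of_notMem hle hind (hu.measurable_iSup (Set.mem_singleton _)) hv
    (fun h => hxy h.symm) hv0

theorem blockDiagPart_momentMatrix (hu : IsClusterAdapted m u) (hv : IsClusterAdapted m v)
    (hv0 : ∀ y, ∫ ω, v ω y ∂μ = 0) :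
    blockDiagPart (momentMatrix μ u v) = momentMatrix μ u v := by
  ext x y
  by_cases hxy : x.1 = y.1
  · simp [blockDiagPart, hxy]
  · simp [blockDiagPart, hxy, integral_mul_eq_zero_of_fst_ne hle hind hu hv hxy (hv0 y)]

theorem memLp_two_mul_of_fst_ne (hu : IsClusterAdapted m u) (hv : IsClusterAdapted m v)
    (hu2 : ∀ x, MemLp (fun ω => u ω x) 2 μ) (hv2 : ∀ y, MemLp (fun ω => v ω y) 2 μ)
    {x y : ClusterIdx ng} (hxy : x.1 ≠ y.1) : MemLp (fun ω => u ω x * v ω y) 2 μ := by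
  refine (memLp_two_iff_integrable_sq
    ((hu2 x).aestronglyMeasurable.mul (hv2 y).aestronglyMeasurable)).2 ?_
  have hsq : IndepFun (fun ω => u ω x ^ 2) (fun ω => v ω y ^ 2) μ :=
    hind.indepFun_of_disjoint hle (Set.disjoint_singleton.2 hxy)
      ((hu.measurable_iSup (Set.mem_singleton _)).pow_const 2)
      ((hv.measurable_iSup (Set.mem_singleton _)).pow_const 2)
  simpa only [Pi.mul_def, mul_pow] using
    hsq.integrable_mul (hu2 x).integrable_sq (hv2 y).integrable_sq

theorem integral_mul_mul_eq_zero_of_fst_ne (hu : IsClusterAdapted m u)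
    (hv : IsClusterAdapted m v) (hw : IsClusterAdapted m w) (hu0 : ∀ x, ∫ ω, u ω x ∂μ = 0)
    (hv0 : ∀ y, ∫ ω, v ω y ∂μ = 0) {x y : ClusterIdx ng} (z : ClusterIdx ng)
    (hxy : x.1 ≠ y.1) : ∫ ω, u ω x * v ω y * w ω z ∂μ = 0 := by
  by_cases hz : z.1 = y.1
  · calc ∫ ω, u ω x * v ω y * w ω z ∂μ = ∫ ω, v ω y * w ω z * u ω x ∂μ := by
          congr 1; ext ω; ring
      _ = 0 := integral_mul_eq_zero_of_notMem hle hind (S := {y.1})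
          ((hv.measurable_iSup (by simp)).mul (hw.measurable_iSup (by simp [hz]))) hu hxy
          (hu0 x)
  · calc ∫ ω, u ω x * v ω y * w ω z ∂μ = ∫ ω, u ω x * w ω z * v ω y ∂μ := by
          congr 1; ext ω; ring
      _ = 0 := integral_mul_eq_zero_of_notMem hle hind (S := {x.1, z.1})
          ((hu.measurable_iSup (by simp)).mul (hw.measurable_iSup (by simp)))
          hv (by simp [Ne.symm hxy, Ne.symm hz]) (hv0 y)

theorem integral_mul_mul_mul_of_fst_ne (hu : IsClusterAdapted m u) (hv : IsClusterAdapted m v)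
    (hu0 : ∀ x, ∫ ω, u ω x ∂μ = 0) (hv0 : ∀ y, ∫ ω, v ω y ∂μ = 0)
    {x y x' y' : ClusterIdx ng} (hxy : x.1 ≠ y.1) :
    ∫ ω, u ω x * v ω y * (u ω x' * v ω y') ∂μ =
      momentMatrix μ u u x x' * momentMatrix μ v v y y' +
        momentMatrix μ u v x y' * momentMatrix μ u v x' y := by
  have huu {a b : ClusterIdx ng} (h : a.1 ≠ b.1) : momentMatrix μ u u a b = 0 :=
    integral_mul_eq_zero_of_fst_ne hle hind hu hu h (hu0 b)
  have hvv {a b : ClusterIdx ng} (h : a.1 ≠ b.1) : momentMatrix μ v v a b = 0 :=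
    integral_mul_eq_zero_of_fst_ne hle hind hv hv h (hv0 b)
  have huv {a b : ClusterIdx ng} (h : a.1 ≠ b.1) : momentMatrix μ u v a b = 0 :=
    integral_mul_eq_zero_of_fst_ne hle hind hu hv h (hv0 b)
  by_cases hsame : x.1 = x'.1 ∧ y.1 = y'.1
  · rw [huv (hsame.2 ▸ hxy), zero_mul, add_zero]
    calc ∫ ω, u ω x * v ω y * (u ω x' * v ω y') ∂μ
        = ∫ ω, u ω x * u ω x' * (v ω y * v ω y') ∂μ := by congr 1; ext ω; ring
      _ = _ := hind.integral_mul_of_disjoint hle (Set.disjoint_singleton.2 hxy)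
          ((hu.measurable_iSup (by simp)).mul (hu.measurable_iSup (by simp [hsame.1])))
          ((hv.measurable_iSup (by simp)).mul (hv.measurable_iSup (by simp [hsame.2])))
  by_cases hswap : x.1 = y'.1 ∧ y.1 = x'.1
  · rw [huu (hswap.2 ▸ hxy), zero_mul, zero_add]
    calc ∫ ω, u ω x * v ω y * (u ω x' * v ω y') ∂μ
        = ∫ ω, u ω x * v ω y' * (u ω x' * v ω y) ∂μ := by congr 1; ext ω; ring
      _ = _ := hind.integral_mul_of_disjoint hle (Set.disjoint_singleton.2 hxy)
          ((hu.measurable_iSup (by simp)).mul (hv.measurable_iSup (by simp [hswap.1])))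
          ((hu.measurable_iSup (by simp [hswap.2])).mul (hv.measurable_iSup (by simp)))
  -- otherwise `x.1` or `y.1` is a cluster that occurs only once
  obtain ⟨hx', hy'⟩ | ⟨hx', hy'⟩ :
      (x.1 ≠ x'.1 ∧ x.1 ≠ y'.1) ∨ (y.1 ≠ x'.1 ∧ y.1 ≠ y'.1) := by
    grind
  · rw [huu hx', huv hy', zero_mul, zero_mul, add_zero]
    calc ∫ ω, u ω x * v ω y * (u ω x' * v ω y') ∂μ
        = ∫ ω, v ω y * (u ω x' * v ω y') * u ω x ∂μ := by congr 1; ext ω; ring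
      _ = 0 := integral_mul_eq_zero_of_notMem hle hind (S := {y.1, x'.1, y'.1})
          ((hv.measurable_iSup (by simp)).mul
            ((hu.measurable_iSup (by simp)).mul (hv.measurable_iSup (by simp))))
          hu (by simp [hxy, hx', hy']) (hu0 x)
  · rw [hvv hy', huv (Ne.symm hx'), mul_zero, mul_zero, add_zero]
    calc ∫ ω, u ω x * v ω y * (u ω x' * v ω y') ∂μ
        = ∫ ω, u ω x * (u ω x' * v ω y') * v ω y ∂μ := by congr 1; ext ω; ring
      _ = 0 := integral_mul_eq_zero_of_notMem hle hind (S := {x.1, x'.1, y'.1})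
          ((hu.measurable_iSup (by simp)).mul
            ((hu.measurable_iSup (by simp)).mul (hv.measurable_iSup (by simp))))
          hv (by simp [Ne.symm hxy, hx', hy']) (hv0 y)

end ClusterMoments

def scoreTerm {Ω ι : Type*} (Q : Matrix ι ι ℝ) (c : ι → ℝ) (u v : Ω → ι → ℝ)
    (p : ι × ι) : Ω → ℝ :=
  fun ω => Q p.1 p.2 * ((c p.1 + u ω p.1) * v ω p.2)

theorem dotProduct_add_mulVec_eq_sum_scoreTerm {Ω ι : Type*} [Fintype ι] (Q : Matrix ι ι ℝ)
    (c : ι → ℝ) (u v : Ω → ι → ℝ) (ω : Ω) :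
    (c + u ω) ⬝ᵥ Q *ᵥ v ω = ∑ p, scoreTerm Q c u v p ω := by
  simp only [dotProduct, mulVec, scoreTerm, Finset.mul_sum, Fintype.sum_prod_type, Pi.add_apply]
  exact Finset.sum_congr rfl fun x _ => Finset.sum_congr rfl fun y _ => by ring

theorem scoreTerm_eq_add {Ω ι : Type*} (Q : Matrix ι ι ℝ) (c : ι → ℝ) (u v : Ω → ι → ℝ)
    (x y : ι) :
    scoreTerm Q c u v (x, y) = fun ω => Q x y * (c x * v ω y) + Q x y * (u ω x * v ω y) := by
  ext ω
  simp only [scoreTerm]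
  ring

section Score
variable {Ω : Type*} {mΩ : MeasurableSpace Ω} {μ : Measure Ω} {G : ℕ} {ng : Fin G → ℕ}
  {m : Fin G → MeasurableSpace Ω} {u v : Ω → ClusterIdx ng → ℝ}
  {Q : Matrix (ClusterIdx ng) (ClusterIdx ng) ℝ} {c : ClusterIdx ng → ℝ}
variable (hle : ∀ g, m g ≤ mΩ) (hind : iIndep m μ)
include hle hind

theorem memLp_scoreTerm (hQ : ∀ x y : ClusterIdx ng, x.1 = y.1 → Q x y = 0)
    (hu : IsClusterAdapted m u) (hv : IsClusterAdapted m v)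
    (hu2 : ∀ x, MemLp (fun ω => u ω x) 2 μ) (hv2 : ∀ y, MemLp (fun ω => v ω y) 2 μ)
    (p : ClusterIdx ng × ClusterIdx ng) : MemLp (scoreTerm Q c u v p) 2 μ := by
  obtain ⟨x, y⟩ := p
  rw [scoreTerm_eq_add]
  by_cases hxy : x.1 = y.1
  · simp [hQ x y hxy]
  · exact (((hv2 y).const_mul _).const_mul _).add
      ((memLp_two_mul_of_fst_ne hle hind hu hv hu2 hv2 hxy).const_mul _)

theorem integral_scoreTerm [IsProbabilityMeasure μ]
    (hQ : ∀ x y : ClusterIdx ng, x.1 = y.1 → Q x y = 0)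
    (hu : IsClusterAdapted m u) (hv : IsClusterAdapted m v) (hv0 : ∀ y, ∫ ω, v ω y ∂μ = 0)
    (hu2 : ∀ x, MemLp (fun ω => u ω x) 2 μ) (hv2 : ∀ y, MemLp (fun ω => v ω y) 2 μ)
    (p : ClusterIdx ng × ClusterIdx ng) : ∫ ω, scoreTerm Q c u v p ω ∂μ = 0 := by
  obtain ⟨x, y⟩ := p
  rw [scoreTerm_eq_add]
  by_cases hxy : x.1 = y.1
  · simp [hQ x y hxy]
  · rw [integral_add ((((hv2 y).integrable one_le_two).const_mul _).const_mul _)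
      (((memLp_two_mul_of_fst_ne hle hind hu hv hu2 hv2 hxy).integrable one_le_two).const_mul _),
      integral_const_mul, integral_const_mul, integral_const_mul, hv0,
      integral_mul_eq_zero_of_fst_ne hle hind hu hv hxy (hv0 y)]
    ring

theorem integral_scoreTerm_mul (hQ : ∀ x y : ClusterIdx ng, x.1 = y.1 → Q x y = 0)
    (hu : IsClusterAdapted m u) (hv : IsClusterAdapted m v)
    (hu0 : ∀ x, ∫ ω, u ω x ∂μ = 0) (hv0 : ∀ y, ∫ ω, v ω y ∂μ = 0)
    (hu2 : ∀ x, MemLp (fun ω => u ω x) 2 μ) (hv2 : ∀ y, MemLp (fun ω => v ω y) 2 μ)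
    (p q : ClusterIdx ng × ClusterIdx ng) :
    ∫ ω, scoreTerm Q c u v p ω * scoreTerm Q c u v q ω ∂μ =
      Q p.1 p.2 * Q q.1 q.2 * (c p.1 * c q.1 * momentMatrix μ v v p.2 q.2 +
        momentMatrix μ u u p.1 q.1 * momentMatrix μ v v p.2 q.2 +
        momentMatrix μ u v p.1 q.2 * momentMatrix μ u v q.1 p.2) := by
  obtain ⟨x, y⟩ := p
  obtain ⟨x', y'⟩ := q
  by_cases hxy : x.1 = y.1
  · simp [scoreTerm, hQ x y hxy]
  by_cases hxy' : x'.1 = y'.1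
  · simp [scoreTerm, hQ x' y' hxy']
  have huv := memLp_two_mul_of_fst_ne hle hind hu hv hu2 hv2 hxy
  have huv' := memLp_two_mul_of_fst_ne hle hind hu hv hu2 hv2 hxy'
  have hexpand : (fun ω => scoreTerm Q c u v (x, y) ω * scoreTerm Q c u v (x', y') ω) =
      fun ω => Q x y * Q x' y' * (c x * c x' * (v ω y * v ω y') +
        c x * (u ω x' * v ω y' * v ω y) + c x' * (u ω x * v ω y * v ω y') +
        u ω x * v ω y * (u ω x' * v ω y')) := by
    ext ω; simp only [scoreTerm]; ring
  have i1 : Integrable (fun ω => c x * c x' * (v ω y * v ω y')) μ :=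
    ((hv2 y).integrable_mul (hv2 y')).const_mul _
  have i2 : Integrable (fun ω => c x * (u ω x' * v ω y' * v ω y)) μ :=
    (huv'.integrable_mul (hv2 y)).const_mul _
  have i3 : Integrable (fun ω => c x' * (u ω x * v ω y * v ω y')) μ :=
    (huv.integrable_mul (hv2 y')).const_mul _
  rw [hexpand, integral_const_mul,
    integral_add (by exact (i1.add i2).add i3) (by exact huv.integrable_mul huv'),
    integral_add (by exact i1.add i2) i3, integral_add i1 i2,
    integral_const_mul, integral_const_mul, integral_const_mul,
    integral_mul_mul_eq_zero_of_fst_ne hle hind hu hv hv hu0 hv0 y hxy',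
    integral_mul_mul_eq_zero_of_fst_ne hle hind hu hv hv hu0 hv0 y' hxy,
    integral_mul_mul_mul_of_fst_ne hle hind hu hv hu0 hv0 hxy]
  simp only [momentMatrix_apply]
  ring

theorem integral_score_eq_zero [IsProbabilityMeasure μ]
    (hQ : ∀ x y : ClusterIdx ng, x.1 = y.1 → Q x y = 0)
    (hu : IsClusterAdapted m u) (hv : IsClusterAdapted m v) (hv0 : ∀ y, ∫ ω, v ω y ∂μ = 0)
    (hu2 : ∀ x, MemLp (fun ω => u ω x) 2 μ) (hv2 : ∀ y, MemLp (fun ω => v ω y) 2 μ) :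
    ∫ ω, (c + u ω) ⬝ᵥ Q *ᵥ v ω ∂μ = 0 := by
  simp_rw [dotProduct_add_mulVec_eq_sum_scoreTerm]
  rw [integral_finsetSum _ fun p _ =>
    (memLp_scoreTerm hle hind hQ hu hv hu2 hv2 p).integrable one_le_two]
  exact Finset.sum_eq_zero fun p _ => integral_scoreTerm hle hind hQ hu hv hv0 hu2 hv2 p

theorem variance_score [IsProbabilityMeasure μ]
    (hQ : ∀ x y : ClusterIdx ng, x.1 = y.1 → Q x y = 0)
    (hu : IsClusterAdapted m u) (hv : IsClusterAdapted m v)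
    (hu0 : ∀ x, ∫ ω, u ω x ∂μ = 0) (hv0 : ∀ y, ∫ ω, v ω y ∂μ = 0)
    (hu2 : ∀ x, MemLp (fun ω => u ω x) 2 μ) (hv2 : ∀ y, MemLp (fun ω => v ω y) 2 μ) :
    variance (fun ω => (c + u ω) ⬝ᵥ Q *ᵥ v ω) μ =
      c ⬝ᵥ (Q * momentMatrix μ v v * Qᵀ) *ᵥ c +
        (momentMatrix μ u u * Q * (momentMatrix μ v v)ᵀ * Qᵀ).trace +
        ((momentMatrix μ u v)ᵀ * Q * (momentMatrix μ u v)ᵀ * Q).trace := by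
  have hT := memLp_scoreTerm hle hind hQ hu hv hu2 hv2 (c := c)
  simp_rw [dotProduct_add_mulVec_eq_sum_scoreTerm]
  rw [← covariance_self (memLp_finsetSum _ fun p _ => hT p).aestronglyMeasurable.aemeasurable,
    covariance_fun_sum_fun_sum hT hT]
  simp only [covariance_eq_sub (hT _) (hT _), integral_scoreTerm hle hind hQ hu hv hv0 hu2 hv2,
    mul_zero, sub_zero, Pi.mul_apply, integral_scoreTerm_mul hle hind hQ hu hv hu0 hv0 hu2 hv2,
    Fintype.sum_prod_type, mul_add, Finset.sum_add_distrib, sum_mul_mul_eq_dotProduct_mulVec,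
    sum_mul_mul_eq_trace, sum_mul_mul_swap_eq_trace]

end Score

theorem exists_iIndep_isClusterAdapted {Ω : Type*} [mΩ : MeasurableSpace Ω] {μ : Measure Ω}
    {G : ℕ} {ng : Fin G → ℕ} {ε η : Ω → ClusterIdx ng → ℝ} (hε : Measurable ε)
    (hη : Measurable η)
    (hind : iIndepFun (fun g ω => (clusterVec (ε ω) g, clusterVec (η ω) g)) μ) :
    ∃ m : Fin G → MeasurableSpace Ω, (∀ g, m g ≤ mΩ) ∧ iIndep m μ ∧
      IsClusterAdapted m ε ∧ IsClusterAdapted m η := by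
  refine ⟨fun g => MeasurableSpace.comap (fun ω => (clusterVec (ε ω) g, clusterVec (η ω) g))
    inferInstance, fun g => ?_, hind.iIndep, fun x => ?_, fun x => ?_⟩
  · exact Measurable.comap_le <|
      (measurable_pi_lambda _ fun i => (measurable_pi_apply _).comp hε).prodMk
        (measurable_pi_lambda _ fun i => (measurable_pi_apply _).comp hη)
  · exact ((measurable_pi_apply x.2).comp measurable_fst).comp
      (comap_measurable fun ω => (clusterVec (ε ω) x.1, clusterVec (η ω) x.1))
  · exact ((measurable_pi_apply x.2).comp measurable_snd).comp
      (comap_measurable fun ω => (clusterVec (ε ω) x.1, clusterVec (η ω) x.1))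

/-- mean and variance of the cluster jackknife score, Theorems 2/3, `p = 1`:
for `x = ZΠ + η` and `P̈ = P - B_P`, `E[xᵀ P̈ ε] = 0` and
`Var(xᵀ P̈ ε) = Πᵀ Zᵀ P̈ Σ P̈ Z Π + ∑_{g≠h} [tr(Ω_g P_{[g,h]} Σ_h P_{[h,g]})
  + tr(Ξ_gᵀ P_{[g,h]} Ξ_hᵀ P_{[h,g]})]`. -/
theorem cluster_jackknife_score_mean_and_variance
    {Ω : Type*} [MeasurableSpace Ω] (μ : Measure Ω) [IsProbabilityMeasure μ]
    {G : ℕ} (ng : Fin G → ℕ) {k : ℕ}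
    (Z : Matrix (ClusterIdx ng) (Fin k) ℝ) (Pi0 : Fin k → ℝ)
    (ε η : Ω → ClusterIdx ng → ℝ)
    (hmeasε : Measurable ε) (hmeasη : Measurable η)
    (hindep : iIndepFun
      (fun g ω => (clusterVec (ε ω) g, clusterVec (η ω) g)) μ)
    (hmeanε : ∀ x : ClusterIdx ng, ∫ ω, ε ω x ∂μ = 0)
    (hmeanη : ∀ x : ClusterIdx ng, ∫ ω, η ω x ∂μ = 0)
    (hmom2ε : ∀ x : ClusterIdx ng, Integrable (fun ω => (ε ω x) ^ 2) μ)
    (hmom2η : ∀ x : ClusterIdx ng, Integrable (fun ω => (η ω x) ^ 2) μ)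
    (P : Matrix (ClusterIdx ng) (ClusterIdx ng) ℝ) (hP : P.IsSymm) :
    (∫ ω, (Z.mulVec Pi0 + η ω) ⬝ᵥ (P - blockDiagPart P).mulVec (ε ω) ∂μ = 0) ∧
    variance (fun ω => (Z.mulVec Pi0 + η ω) ⬝ᵥ (P - blockDiagPart P).mulVec (ε ω)) μ =
      Z.mulVec Pi0 ⬝ᵥ
        ((P - blockDiagPart P) * covMatrix μ ε * (P - blockDiagPart P)).mulVec (Z.mulVec Pi0) +
      ∑ g : Fin G, ∑ h : Fin G, if g = h then 0 else
        ((covBlock2 μ η η g * clusterSub P g h * covBlock2 μ ε ε h * clusterSub P h g).trace +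
         ((covBlock2 μ η ε g)ᵀ * clusterSub P g h * (covBlock2 μ η ε h)ᵀ *
           clusterSub P h g).trace) := by
  obtain ⟨m, hle, hind, hε, hη⟩ := exists_iIndep_isClusterAdapted hmeasε hmeasη hindep
  have hε2 (x : ClusterIdx ng) : MemLp (fun ω => ε ω x) 2 μ :=
    (memLp_two_iff_integrable_sq (hmeasε.eval (a := x)).aestronglyMeasurable).2 (hmom2ε x)
  have hη2 (x : ClusterIdx ng) : MemLp (fun ω => η ω x) 2 μ :=
    (memLp_two_iff_integrable_sq (hmeasη.eval (a := x)).aestronglyMeasurable).2 (hmom2η x)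
  have hQ (x y : ClusterIdx ng) : x.1 = y.1 → (P - blockDiagPart P) x y = 0 :=
    sub_blockDiagPart_apply_of_fst_eq P
  have hεε := blockDiagPart_momentMatrix hle hind hε hε hmeanε
  have hηη := blockDiagPart_momentMatrix hle hind hη hη hmeanη
  have hηε : blockDiagPart (momentMatrix μ η ε)ᵀ = (momentMatrix μ η ε)ᵀ := by
    rw [← blockDiagPart_transpose, blockDiagPart_momentMatrix hle hind hη hε hmeanε]
  refine ⟨integral_score_eq_zero hle hind hQ hη hε hmeanε hη2 hε2, ?_⟩
  rw [variance_score hle hind hQ hη hε hmeanη hmeanε hη2 hε2, hP.sub_blockDiagPart.eq,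
    momentMatrix_transpose, show covMatrix μ ε = momentMatrix μ ε ε from hεε,
    trace_mul_mul_mul_of_blockDiagPart_eq hηη hεε,
    trace_mul_mul_mul_of_blockDiagPart_eq hηε hηε]
  simp only [trace_mul_clusterSub_sub_blockDiagPart]
  simp only [clusterSub_transpose, clusterSub_momentMatrix_self, add_assoc,
    ← Finset.sum_add_distrib, ite_add_ite, add_zero]
end

section
/- Let ε ∈ R^n, let Z be a real n×k matrix such that ZᵀB_{εε'}Z is invertible, let s ∈ {−1,+1}^G, and define ε^s ∈ R^n by (ε^s)_{[g]} = s_g·ε_{[g]} for every cluster g. Then B_{ε^s} = B_ε·D_s where D_s is the G×G diagonal matrix with diagonal s, B_{ε^s(ε^s)'} = B_{εε'}, and ι_Gᵀ B_{ε^s}ᵀ Z (Zᵀ B_{ε^s(ε^s)'} Z)^{-1} Zᵀ B_{ε^s} ι_G = sᵀ B_εᵀ Z (Zᵀ B_{εε'} Z)^{-1} Zᵀ B_ε s, where ι_G is the all-ones vector in R^G. -/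
open Matrix BigOperators

/-- The `n × G` matrix `B_v`: column `g` agrees with `v` on rows of cluster `g`
and is zero elsewhere. -/
def Bvec {G : ℕ} {ng : Fin G → ℕ} (v : ClusterIdx ng → ℝ) :
    Matrix (ClusterIdx ng) (Fin G) ℝ :=
  Matrix.of fun x g => if x.1 = g then v x else 0

/-- The `n × n` block-diagonal matrix `B_{vv'}` with `g`-th diagonal block
`v_{[g]} v_{[g]}ᵀ`. -/
def Bouter {G : ℕ} {ng : Fin G → ℕ} (v : ClusterIdx ng → ℝ) :
    Matrix (ClusterIdx ng) (ClusterIdx ng) ℝ :=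
  Matrix.of fun x y => if x.1 = y.1 then v x * v y else 0

/-- sign-flip invariance, underlying Theorem 4: for cluster sign
flips `ε^s` with `(ε^s)_{[g]} = s_g ε_{[g]}`, one has `B_{ε^s} = B_ε D_s`,
`B_{ε^s (ε^s)'} = B_{εε'}`, and
`ιᵀ B_{ε^s}ᵀ Z (Zᵀ B_{ε^s(ε^s)'} Z)⁻¹ Zᵀ B_{ε^s} ι = sᵀ B_εᵀ Z (Zᵀ B_{εε'} Z)⁻¹ Zᵀ B_ε s`. -/
theorem cluster_sign_flip_invariance
    {G : ℕ} (ng : Fin G → ℕ) {k : ℕ}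
    (ε : ClusterIdx ng → ℝ) (Z : Matrix (ClusterIdx ng) (Fin k) ℝ)
    (hinv : IsUnit (Zᵀ * Bouter ε * Z))
    (s : Fin G → ℝ) (hs : ∀ g, s g = 1 ∨ s g = -1)
    (εs : ClusterIdx ng → ℝ) (hεs : ∀ x : ClusterIdx ng, εs x = s x.1 * ε x) :
    Bvec εs = Bvec ε * Matrix.diagonal s ∧
    Bouter εs = Bouter ε ∧
    (fun _ : Fin G => (1 : ℝ)) ⬝ᵥ
        ((Bvec εs)ᵀ * Z * (Zᵀ * Bouter εs * Z)⁻¹ * Zᵀ * Bvec εs).mulVec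
          (fun _ : Fin G => (1 : ℝ)) =
      s ⬝ᵥ ((Bvec ε)ᵀ * Z * (Zᵀ * Bouter ε * Z)⁻¹ * Zᵀ * Bvec ε).mulVec s := by
  have hsq : ∀ g, s g * s g = 1 := by
    intro g; rcases hs g with h | h <;> simp [h]
  have h1 : Bvec εs = Bvec ε * Matrix.diagonal s := by
    ext x g
    simp only [Bvec, Matrix.mul_diagonal, Matrix.of_apply, hεs]
    by_cases h : x.1 = g
    · subst h; simp [mul_comm]
    · simp [h]
  have h2 : Bouter εs = Bouter ε := by
    ext x y
    simp only [Bouter, Matrix.of_apply, hεs]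
    by_cases h : x.1 = y.1
    · simp only [h, if_true]
      rw [mul_mul_mul_comm, hsq, one_mul]
    · simp [h]
  refine ⟨h1, h2, ?_⟩
  rw [h1, h2]
  set M := (Bvec ε)ᵀ * Z * (Zᵀ * Bouter ε * Z)⁻¹ * Zᵀ * Bvec ε with hM
  have hLHS : (Bvec ε * Matrix.diagonal s)ᵀ * Z * (Zᵀ * Bouter ε * Z)⁻¹ * Zᵀ *
      (Bvec ε * Matrix.diagonal s) = Matrix.diagonal s * M * Matrix.diagonal s := by
    simp only [Matrix.transpose_mul, Matrix.diagonal_transpose, hM, Matrix.mul_assoc]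
  rw [hLHS]
  have hvec : (Matrix.diagonal s).mulVec (fun _ : Fin G => (1 : ℝ)) = s := by
    ext g; simp [Matrix.mulVec_diagonal]
  rw [← Matrix.mulVec_mulVec, ← Matrix.mulVec_mulVec, hvec, Matrix.dotProduct_mulVec]
  congr 1
  ext g
  simp [Matrix.vecMul_diagonal]
end

section
/- Let ε be a random vector in R^n and let r = (r_1,…,r_G) be independent Rademacher random variables (each equal to ±1 with probability 1/2) independent of ε. Let Z be a fixed real n×k matrix and assume Zᵀ B_{εε'} Z is invertible almost surely. Define the G×G random matrix P = B_εᵀ Z (Zᵀ B_{εε'} Z)^{-1} Zᵀ B_ε and let Ṗ be P with its diagonal entries set to zero. If the random vector (r_1·ε_{[1]},…, r_G·ε_{[G]}) (stacked into R^n) has the same distribution as ε, then the random variable ι_Gᵀ Ṗ ι_G has the same distribution as rᵀ Ṗ r, where ι_G is the all-ones vector in R^G. -/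
open Matrix MeasureTheory ProbabilityTheory BigOperators

/-! Flipping the signs of the clusters of `v` by `s ∈ {±1}^G` multiplies `B_v` on the right by
`D_s = diagonal s` and leaves `B_{vv'}` unchanged, so `P(s·v) = D_s P(v) D_s`; the same holds
for the zero-diagonal part `Ṗ`, whence `ι_Gᵀ Ṗ(r·ε) ι_G = rᵀ Ṗ(ε) r`. Reflection invariance
then replaces `r·ε` by `ε` on the left-hand side. -/

namespace Matrix

variable {n R : Type*} [Fintype n] [DecidableEq n]

theorem one_dotProduct_diagonal_mul_mul_diagonal_mulVec_one [CommSemiring R]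
    (s : n → R) (A : Matrix n n R) :
    (fun _ => 1) ⬝ᵥ (diagonal s * A * diagonal s) *ᵥ (fun _ => 1) = s ⬝ᵥ A *ᵥ s := by
  have hs : diagonal s *ᵥ (fun _ => (1 : R)) = s := by ext i; simp [mulVec_diagonal]
  have hs' : (fun _ => (1 : R)) ᵥ* diagonal s = s := by ext i; simp [vecMul_diagonal]
  rw [← mulVec_mulVec, ← mulVec_mulVec, hs, dotProduct_mulVec, hs']

theorem diagonal_mul_mul_diagonal_sub_diagonal_diag [CommRing R] (s t : n → R)
    (A : Matrix n n R) :
    diagonal s * A * diagonal t - diagonal (diag (diagonal s * A * diagonal t)) =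
      diagonal s * (A - diagonal (diag A)) * diagonal t := by
  ext i j
  by_cases hij : i = j
  · subst hij; simp
  · simp [hij, diagonal_apply_ne]

theorem measurable_inv_apply_of_continuous {X : Type*} [TopologicalSpace X] [MeasurableSpace X]
    [OpensMeasurableSpace X] {M : X → Matrix n n ℝ} (hM : Continuous M) (i j : n) :
    Measurable fun x => (M x)⁻¹ i j := by
  simp only [inv_def, Ring.inverse_eq_inv', smul_apply, smul_eq_mul]
  exact (measurable_inv.comp hM.matrix_det.measurable).mul
    (hM.matrix_adjugate.matrix_elem i j).measurable

end Matrix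

theorem Continuous.measurable_mul_inv_mul_apply {X m n p : Type*} [TopologicalSpace X]
    [MeasurableSpace X] [OpensMeasurableSpace X] [Fintype n] [DecidableEq n]
    {A : X → Matrix m n ℝ} {M : X → Matrix n n ℝ} {B : X → Matrix n p ℝ}
    (hA : Continuous A) (hM : Continuous M) (hB : Continuous B) (i : m) (j : p) :
    Measurable fun x => (A x * (M x)⁻¹ * B x) i j := by
  simp only [mul_apply]
  refine Finset.measurable_sum _ fun b _ => Measurable.mul ?_ (hB.matrix_elem b j).measurable
  exact Finset.measurable_sum _ fun a _ =>
    (hA.matrix_elem i a).measurable.mul (Matrix.measurable_inv_apply_of_continuous hM a b)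

theorem ae_mul_self_eq_one_of_map_eq {Ω : Type*} [MeasurableSpace Ω] {μ : Measure Ω}
    {X : Ω → ℝ} (hX : AEMeasurable X μ) {a b : ENNReal}
    (hmap : μ.map X = a • Measure.dirac 1 + b • Measure.dirac (-1)) :
    ∀ᵐ ω ∂μ, X ω * X ω = 1 := by
  have hset : MeasurableSet {x : ℝ | x * x = 1} :=
    measurableSet_eq_fun (measurable_id.mul measurable_id) measurable_const
  refine (ae_map_iff hX hset).mp ?_
  rw [hmap, ae_add_measure_iff]
  constructor <;> refine Measure.ae_smul_measure ?_ _ <;> simp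

variable {G : ℕ} {ng : Fin G → ℕ} {k : ℕ}

@[fun_prop]
theorem continuous_Bvec : Continuous (Bvec : (ClusterIdx ng → ℝ) → _) := by
  refine continuous_pi fun x => continuous_pi fun g => ?_
  simp only [Bvec, of_apply]
  split_ifs <;> fun_prop

@[fun_prop]
theorem continuous_Bouter : Continuous (Bouter : (ClusterIdx ng → ℝ) → _) := by
  refine continuous_pi fun x => continuous_pi fun y => ?_
  simp only [Bouter, of_apply]
  split_ifs <;> fun_prop

theorem Bvec_clusterwise_mul (s : Fin G → ℝ) (v : ClusterIdx ng → ℝ) :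
    Bvec (fun x => s x.1 * v x) = Bvec v * diagonal s := by
  ext x g
  by_cases h : x.1 = g
  · subst h; simp [Bvec, mul_comm]
  · simp [Bvec, h]

theorem Bouter_clusterwise_mul {s : Fin G → ℝ} (hs : ∀ g, s g * s g = 1)
    (v : ClusterIdx ng → ℝ) : Bouter (fun x => s x.1 * v x) = Bouter v := by
  ext x y
  by_cases h : x.1 = y.1
  · simp only [Bouter, of_apply, h, if_true]
    linear_combination v x * v y * hs y.1
  · simp [Bouter, h]

noncomputable def clusterP (Z : Matrix (ClusterIdx ng) (Fin k) ℝ) (v : ClusterIdx ng → ℝ) :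
    Matrix (Fin G) (Fin G) ℝ :=
  (Bvec v)ᵀ * Z * (Zᵀ * Bouter v * Z)⁻¹ * Zᵀ * Bvec v

theorem clusterP_clusterwise_mul (Z : Matrix (ClusterIdx ng) (Fin k) ℝ) {s : Fin G → ℝ}
    (hs : ∀ g, s g * s g = 1) (v : ClusterIdx ng → ℝ) :
    clusterP Z (fun x => s x.1 * v x) = diagonal s * clusterP Z v * diagonal s := by
  simp only [clusterP, Bvec_clusterwise_mul, Bouter_clusterwise_mul hs, transpose_mul,
    diagonal_transpose, Matrix.mul_assoc]

theorem measurable_clusterP_apply (Z : Matrix (ClusterIdx ng) (Fin k) ℝ) (g h : Fin G) :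
    Measurable fun v => clusterP Z v g h := by
  have hP : ∀ v, clusterP Z v =
      ((Bvec v)ᵀ * Z) * (Zᵀ * Bouter v * Z)⁻¹ * (Zᵀ * Bvec v) := by
    simp [clusterP, Matrix.mul_assoc]
  simp only [hP]
  exact Continuous.measurable_mul_inv_mul_apply (by fun_prop) (by fun_prop) (by fun_prop) g h

theorem measurable_dotProduct_mulVec {X m n : Type*} [MeasurableSpace X] [Fintype m] [Fintype n]
    {A : X → Matrix m n ℝ} (hA : ∀ i j, Measurable fun x => A x i j)
    (u : m → ℝ) (w : n → ℝ) : Measurable fun x => u ⬝ᵥ A x *ᵥ w := by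
  simp only [dotProduct, mulVec]
  exact Finset.measurable_sum _ fun i _ => measurable_const.mul <|
    Finset.measurable_sum _ fun j _ => (hA i j).mul measurable_const

theorem measurable_sub_diagonal_diag_apply {X n : Type*} [MeasurableSpace X] [DecidableEq n]
    {A : X → Matrix n n ℝ} (hA : ∀ i j, Measurable fun x => A x i j) (i j : n) :
    Measurable fun x => (A x - diagonal (A x).diag) i j := by
  by_cases hij : i = j
  · subst hij; simp
  · simpa [hij] using hA i j

theorem cluster_many_instrument_AR_identDistrib_general
    {Ω : Type*} [MeasurableSpace Ω] (μ : Measure Ω)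
    {G : ℕ} (ng : Fin G → ℕ) {k : ℕ}
    (Z : Matrix (ClusterIdx ng) (Fin k) ℝ)
    (ε : Ω → ClusterIdx ng → ℝ) (r : Ω → Fin G → ℝ)
    (hmeasr : Measurable r)
    -- each `r_g` is a Rademacher random variable
    (hrad : ∀ g : Fin G, Measure.map (fun ω => r ω g) μ =
      (2 : ENNReal)⁻¹ • Measure.dirac (1 : ℝ) + (2 : ENNReal)⁻¹ • Measure.dirac (-1 : ℝ))
    -- the random `G × G` matrix `P` and its zero-diagonal version `Ṗ`
    (Pmat Pdot : Ω → Matrix (Fin G) (Fin G) ℝ)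
    (hPmat : ∀ ω, Pmat ω =
      (Bvec (ε ω))ᵀ * Z * (Zᵀ * Bouter (ε ω) * Z)⁻¹ * Zᵀ * Bvec (ε ω))
    (hPdot : ∀ ω g h, Pdot ω g h = if g = h then 0 else Pmat ω g h)
    -- reflection invariance: `(r₁ ε_{[1]}, …, r_G ε_{[G]})` has the same law as `ε`
    (hrefl : IdentDistrib (fun ω => fun x : ClusterIdx ng => r ω x.1 * ε ω x) ε μ μ) :
    IdentDistrib
      (fun ω => (fun _ : Fin G => (1 : ℝ)) ⬝ᵥ (Pdot ω).mulVec (fun _ : Fin G => (1 : ℝ)))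
      (fun ω => r ω ⬝ᵥ (Pdot ω).mulVec (r ω)) μ μ := by
  let offDiagP v := clusterP Z v - diagonal (clusterP Z v).diag
  let F v := (fun _ : Fin G => (1 : ℝ)) ⬝ᵥ offDiagP v *ᵥ (fun _ => 1)
  have hPdot_eq : ∀ ω, Pdot ω = offDiagP (ε ω) := fun ω => by
    ext g h
    by_cases hgh : g = h <;> simp [offDiagP, hPdot, hPmat, clusterP, hgh]
  have hF : Measurable F :=
    measurable_dotProduct_mulVec
      (measurable_sub_diagonal_diag_apply (measurable_clusterP_apply Z)) _ _
  have hsq : ∀ᵐ ω ∂μ, ∀ g, r ω g * r ω g = 1 := ae_all_iff.2 fun g =>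
    ae_mul_self_eq_one_of_map_eq (measurable_pi_apply g |>.comp hmeasr).aemeasurable (hrad g)
  have hreflect : F ∘ (fun ω x => r ω x.1 * ε ω x) =ᵐ[μ]
      fun ω => r ω ⬝ᵥ Pdot ω *ᵥ r ω := by
    filter_upwards [hsq] with ω hω
    simp only [Function.comp_apply, F, offDiagP, clusterP_clusterwise_mul Z hω, hPdot_eq,
      diagonal_mul_mul_diagonal_sub_diagonal_diag,
      one_dotProduct_diagonal_mul_mul_diagonal_mulVec_one]
  simp only [hPdot_eq] at hreflect ⊢
  exact (hrefl.symm.comp hF).trans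
    (IdentDistrib.of_ae_eq (hF.comp_aemeasurable hrefl.aemeasurable_fst) hreflect)

/-- distributional equivalence in Theorem 4: under cluster reflection
invariance, `ι_Gᵀ Ṗ ι_G` has the same distribution as `rᵀ Ṗ r`, where
`P = B_εᵀ Z (Zᵀ B_{εε'} Z)⁻¹ Zᵀ B_ε` and `Ṗ` is `P` with zero diagonal. -/
theorem cluster_many_instrument_AR_identDistrib
    {Ω : Type*} [MeasurableSpace Ω] (μ : Measure Ω) [IsProbabilityMeasure μ]
    {G : ℕ} (ng : Fin G → ℕ) {k : ℕ}
    (Z : Matrix (ClusterIdx ng) (Fin k) ℝ)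
    (ε : Ω → ClusterIdx ng → ℝ) (r : Ω → Fin G → ℝ)
    (hmeasε : Measurable ε) (hmeasr : Measurable r)
    -- each `r_g` is a Rademacher random variable
    (hrad : ∀ g : Fin G, Measure.map (fun ω => r ω g) μ =
      (2 : ENNReal)⁻¹ • Measure.dirac (1 : ℝ) + (2 : ENNReal)⁻¹ • Measure.dirac (-1 : ℝ))
    -- the `r_g` are mutually independent
    (hrindep : iIndepFun
      (fun g ω => r ω g) μ)
    -- `r` is independent of `ε`
    (hrε : IndepFun r ε μ)
    -- `Zᵀ B_{εε'} Z` is invertible almost surely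
    (hinv : ∀ᵐ ω ∂μ, IsUnit (Zᵀ * Bouter (ε ω) * Z))
    -- the random `G × G` matrix `P` and its zero-diagonal version `Ṗ`
    (Pmat Pdot : Ω → Matrix (Fin G) (Fin G) ℝ)
    (hPmat : ∀ ω, Pmat ω =
      (Bvec (ε ω))ᵀ * Z * (Zᵀ * Bouter (ε ω) * Z)⁻¹ * Zᵀ * Bvec (ε ω))
    (hPdot : ∀ ω g h, Pdot ω g h = if g = h then 0 else Pmat ω g h)
    -- reflection invariance: `(r₁ ε_{[1]}, …, r_G ε_{[G]})` has the same law as `ε`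
    (hrefl : IdentDistrib (fun ω => fun x : ClusterIdx ng => r ω x.1 * ε ω x) ε μ μ) :
    IdentDistrib
      (fun ω => (fun _ : Fin G => (1 : ℝ)) ⬝ᵥ (Pdot ω).mulVec (fun _ : Fin G => (1 : ℝ)))
      (fun ω => r ω ⬝ᵥ (Pdot ω).mulVec (r ω)) μ μ :=
  cluster_many_instrument_AR_identDistrib_general μ ng Z ε r hmeasr hrad Pmat Pdot hPmat hPdot hrefl
end

section
/- Let Z be a real n×k matrix and X a real n×p matrix, and fix a cluster g. Suppose ZᵀZ is invertible and I_{n_g} − Z_{[g]}(ZᵀZ)^{-1}Z_{[g]}ᵀ is invertible, and set Π̂ = (ZᵀZ)^{-1}ZᵀX. Then ZᵀZ − Z_{[g]}ᵀZ_{[g]} is invertible and (ZᵀZ − Z_{[g]}ᵀZ_{[g]})^{-1}(ZᵀX − Z_{[g]}ᵀX_{[g]}) = Π̂ − (ZᵀZ)^{-1} Z_{[g]}ᵀ (I_{n_g} − Z_{[g]}(ZᵀZ)^{-1}Z_{[g]}ᵀ)^{-1} (X_{[g]} − Z_{[g]}Π̂). -/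
/-!
Write `A = ZᵀZ`, `U = Z_{[g]}ᵀ`, `V = Z_{[g]}` and `S = 1 − V A⁻¹ U`. Leaving cluster `g` out
downdates `A` to `A − U V`; the matrix determinant lemma gives `det (A − U V) = det A · det S`, and
the Woodbury identity with `C = −1` gives `(A − U V)⁻¹ = A⁻¹ + A⁻¹ U S⁻¹ V A⁻¹`. Multiplying out
against `ZᵀX − U X_{[g]}`, the relation `S⁻¹ V A⁻¹ U = S⁻¹ − 1` collapses the four terms.
-/

open Matrix BigOperators

/-- The `n_g × m` submatrix `A_{[g]}` of rows in cluster `g`. -/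
def clusterRows {G : ℕ} {ng : Fin G → ℕ} {m : Type*}
    (A : Matrix (ClusterIdx ng) m ℝ) (g : Fin G) : Matrix (Fin (ng g)) m ℝ :=
  Matrix.of fun i j => A ⟨g, i⟩ j

namespace Matrix

variable {n m : Type*} [Fintype n] [Fintype m] [DecidableEq n] [DecidableEq m]
  {α : Type*} [CommRing α] {A : Matrix n n α} {U : Matrix n m α} {V : Matrix m n α}

theorem inv_neg_of_isUnit {S : Matrix m m α} (hS : IsUnit S) : (-S)⁻¹ = -S⁻¹ :=
  inv_eq_right_inv <| by rw [neg_mul_neg, mul_nonsing_inv _ ((isUnit_iff_isUnit_det _).mp hS)]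

theorem isUnit_sub_mul (hA : IsUnit A) (hS : IsUnit (1 - V * A⁻¹ * U)) :
    IsUnit (A - U * V) := by
  rw [isUnit_iff_isUnit_det] at hA hS ⊢
  rw [sub_eq_add_neg, ← Matrix.neg_mul, det_add_mul _ _ hA, Matrix.mul_neg, ← sub_eq_add_neg]
  exact hA.mul hS

theorem sub_mul_inv_eq_add (hA : IsUnit A) (hS : IsUnit (1 - V * A⁻¹ * U)) :
    (A - U * V)⁻¹ = A⁻¹ + A⁻¹ * U * (1 - V * A⁻¹ * U)⁻¹ * V * A⁻¹ := by
  have hC : (-1 : Matrix m m α)⁻¹ + V * A⁻¹ * U = -(1 - V * A⁻¹ * U) := by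
    rw [inv_neg_of_isUnit isUnit_one, inv_one]
    abel
  have woodbury := add_mul_mul_inv_eq_sub A U (-1) V hA isUnit_one.neg (hC ▸ hS.neg)
  rw [hC, inv_neg_of_isUnit hS, Matrix.mul_neg, Matrix.mul_one, Matrix.neg_mul,
    ← sub_eq_add_neg] at woodbury
  rw [woodbury]
  simp only [Matrix.mul_neg, Matrix.neg_mul, sub_neg_eq_add]

theorem sub_mul_inv_mul_sub_mul {q : Type*} [Fintype q] (hA : IsUnit A)
    (hS : IsUnit (1 - V * A⁻¹ * U)) (W : Matrix n q α) (Y : Matrix m q α) :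
    (A - U * V)⁻¹ * (W - U * Y) =
      A⁻¹ * W - A⁻¹ * U * (1 - V * A⁻¹ * U)⁻¹ * (Y - V * (A⁻¹ * W)) := by
  have hT : (1 - V * A⁻¹ * U)⁻¹ * (1 - V * A⁻¹ * U) = 1 :=
    nonsing_inv_mul _ ((isUnit_iff_isUnit_det _).mp hS)
  rw [sub_mul_inv_eq_add hA hS]
  generalize (1 - V * A⁻¹ * U)⁻¹ = T at hT ⊢
  have hTVAU : T * (V * (A⁻¹ * (U * Y))) = T * Y - Y :=
    calc T * (V * (A⁻¹ * (U * Y))) = T * Y - T * (1 - V * A⁻¹ * U) * Y := by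
          simp only [Matrix.mul_sub, Matrix.sub_mul, Matrix.mul_one, Matrix.mul_assoc,
            sub_sub_cancel]
      _ = T * Y - Y := by rw [hT, Matrix.one_mul]
  simp only [Matrix.add_mul, Matrix.mul_sub, Matrix.mul_assoc, hTVAU]
  abel

end Matrix

/-- leave-cluster-out least squares via the Woodbury identity,
Appendix D: if `ZᵀZ` and `I_{n_g} − Z_{[g]}(ZᵀZ)⁻¹Z_{[g]}ᵀ` are invertible and
`Π̂ = (ZᵀZ)⁻¹ZᵀX`, then `ZᵀZ − Z_{[g]}ᵀZ_{[g]}` is invertible and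
`(ZᵀZ − Z_{[g]}ᵀZ_{[g]})⁻¹(ZᵀX − Z_{[g]}ᵀX_{[g]})
  = Π̂ − (ZᵀZ)⁻¹ Z_{[g]}ᵀ (I − Z_{[g]}(ZᵀZ)⁻¹Z_{[g]}ᵀ)⁻¹ (X_{[g]} − Z_{[g]}Π̂)`. -/
theorem leave_cluster_out_least_squares
    {G : ℕ} (ng : Fin G → ℕ) {k p : ℕ}
    (Z : Matrix (ClusterIdx ng) (Fin k) ℝ) (X : Matrix (ClusterIdx ng) (Fin p) ℝ)
    (g : Fin G)
    (hZZ : IsUnit (Zᵀ * Z))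
    (hI : IsUnit ((1 : Matrix (Fin (ng g)) (Fin (ng g)) ℝ) -
      clusterRows Z g * (Zᵀ * Z)⁻¹ * (clusterRows Z g)ᵀ))
    (Pihat : Matrix (Fin k) (Fin p) ℝ) (hPihat : Pihat = (Zᵀ * Z)⁻¹ * Zᵀ * X) :
    IsUnit (Zᵀ * Z - (clusterRows Z g)ᵀ * clusterRows Z g) ∧
    (Zᵀ * Z - (clusterRows Z g)ᵀ * clusterRows Z g)⁻¹ *
        (Zᵀ * X - (clusterRows Z g)ᵀ * clusterRows X g) =
      Pihat - (Zᵀ * Z)⁻¹ * (clusterRows Z g)ᵀ *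
        ((1 : Matrix (Fin (ng g)) (Fin (ng g)) ℝ) -
          clusterRows Z g * (Zᵀ * Z)⁻¹ * (clusterRows Z g)ᵀ)⁻¹ *
        (clusterRows X g - clusterRows Z g * Pihat) := by
  subst hPihat
  refine ⟨isUnit_sub_mul hZZ hI, ?_⟩
  rw [sub_mul_inv_mul_sub_mul hZZ hI, Matrix.mul_assoc _ Zᵀ X]
end

section
/- Let Z be a real n×k matrix with ZᵀZ invertible, P = Z(ZᵀZ)^{-1}Zᵀ, and M = I_n − P. Assume every diagonal block M_{[g,g]} is invertible, and set P̃ = P − B_P·B_M^{-1}·M. Then every diagonal block of P̃ is zero, i.e. B_{P̃} = 0, and P̃·Z = Z. -/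
open Matrix BigOperators

lemma blockDiagPart_eq_blockDiagonal' {G : ℕ} {ng : Fin G → ℕ}
    (A : Matrix (ClusterIdx ng) (ClusterIdx ng) ℝ) :
    blockDiagPart A = Matrix.blockDiagonal' (fun g => clusterSub A g g) := by
  ext ⟨g, i⟩ ⟨h, j⟩
  by_cases hgh : g = h
  · subst hgh
    simp [blockDiagPart, Matrix.blockDiagonal'_apply, clusterSub]
  · simp [blockDiagPart, Matrix.blockDiagonal'_apply, hgh]

lemma blockDiagPart_blockDiagonal' {G : ℕ} {ng : Fin G → ℕ}
    (d : ∀ g : Fin G, Matrix (Fin (ng g)) (Fin (ng g)) ℝ) :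
    blockDiagPart (Matrix.blockDiagonal' d) = Matrix.blockDiagonal' d := by
  ext ⟨g, i⟩ ⟨h, j⟩
  by_cases hgh : g = h
  · subst hgh; simp [blockDiagPart]
  · simp [blockDiagPart, Matrix.blockDiagonal'_apply, hgh]

lemma blockDiagPart_bd_mul {G : ℕ} {ng : Fin G → ℕ}
    (A C : Matrix (ClusterIdx ng) (ClusterIdx ng) ℝ) :
    blockDiagPart (blockDiagPart A * C) = blockDiagPart A * blockDiagPart C := by
  ext x y
  simp only [blockDiagPart, Matrix.mul_apply, Matrix.of_apply]
  by_cases h : x.1 = y.1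
  · simp only [h, if_true]
    refine Finset.sum_congr rfl fun z _ => ?_
    by_cases hz : z.1 = y.1
    · rw [if_pos hz]
    · rw [if_neg hz, mul_zero, if_neg (fun e => hz e.symm), zero_mul]
  · simp only [h, if_false]
    refine (Finset.sum_eq_zero fun z _ => ?_).symm
    by_cases hz : x.1 = z.1
    · have hzy : ¬ z.1 = y.1 := fun hzy => h (hz.trans hzy)
      simp [hzy]
    · simp [hz]

/-- the symmetric cluster jackknife matrix `P̃_CL`, Section 3.3:
for `P = Z(ZᵀZ)⁻¹Zᵀ`, `M = I − P`, with every diagonal block `M_{[g,g]}` invertible,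
the matrix `P̃ = P − B_P B_M⁻¹ M` has zero block diagonal and satisfies `P̃ Z = Z`. -/
theorem symmetric_cluster_jackknife_matrix
    {G : ℕ} (ng : Fin G → ℕ) {k : ℕ}
    (Z : Matrix (ClusterIdx ng) (Fin k) ℝ) (hZZ : IsUnit (Zᵀ * Z))
    (P M : Matrix (ClusterIdx ng) (ClusterIdx ng) ℝ)
    (hP : P = Z * (Zᵀ * Z)⁻¹ * Zᵀ) (hM : M = 1 - P)
    (hMgg : ∀ g : Fin G, IsUnit (clusterSub M g g))
    (Ptilde : Matrix (ClusterIdx ng) (ClusterIdx ng) ℝ)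
    (hPtilde : Ptilde = P - blockDiagPart P * (blockDiagPart M)⁻¹ * M) :
    blockDiagPart Ptilde = 0 ∧ Ptilde * Z = Z := by
  set D : ∀ g : Fin G, Matrix (Fin (ng g)) (Fin (ng g)) ℝ := fun g => clusterSub M g g with hD
  have hBM : blockDiagPart M = Matrix.blockDiagonal' D := blockDiagPart_eq_blockDiagonal' M
  set X : Matrix (ClusterIdx ng) (ClusterIdx ng) ℝ :=
    Matrix.blockDiagonal' (fun g => (D g)⁻¹) with hX
  have hXBM : X * blockDiagPart M = 1 := by
    rw [hBM, hX, ← Matrix.blockDiagonal'_mul]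
    have : (fun g => (D g)⁻¹ * D g) = fun g : Fin G => (1 : Matrix (Fin (ng g)) (Fin (ng g)) ℝ) := by
      funext g
      exact Matrix.nonsing_inv_mul (D g) ((Matrix.isUnit_iff_isUnit_det (D g)).mp (hMgg g))
    rw [this]; exact Matrix.blockDiagonal'_one
  have hBMX : blockDiagPart M * X = 1 := mul_eq_one_comm.mp hXBM
  have hinv : (blockDiagPart M)⁻¹ = X := Matrix.inv_eq_left_inv hXBM
  have hXbd : blockDiagPart X = X := by rw [hX]; exact blockDiagPart_blockDiagonal' _
  have hPZ : P * Z = Z := by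
    have h1 : (Zᵀ * Z)⁻¹ * (Zᵀ * Z) = 1 :=
      Matrix.nonsing_inv_mul _ ((Matrix.isUnit_iff_isUnit_det _).mp hZZ)
    calc P * Z = Z * ((Zᵀ * Z)⁻¹ * (Zᵀ * Z)) := by rw [hP]; simp only [Matrix.mul_assoc]
    _ = Z := by rw [h1, Matrix.mul_one]
  have hMZ : M * Z = 0 := by rw [hM, Matrix.sub_mul, Matrix.one_mul, hPZ, sub_self]
  constructor
  · -- block diagonal part is zero
    have key : blockDiagPart (blockDiagPart P * X * M) = blockDiagPart P := by
      have h1 : blockDiagPart (blockDiagPart P * X) = blockDiagPart P * X := by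
        rw [blockDiagPart_bd_mul, hXbd]
      have h2 : blockDiagPart (blockDiagPart P * X * M)
          = blockDiagPart P * X * blockDiagPart M := by
        conv_lhs => rw [← h1]
        rw [blockDiagPart_bd_mul, h1]
      rw [h2, Matrix.mul_assoc, hXBM, Matrix.mul_one]
    have : blockDiagPart Ptilde
        = blockDiagPart P - blockDiagPart (blockDiagPart P * X * M) := by
      rw [hPtilde, hinv]
      ext x y
      simp only [blockDiagPart, Matrix.of_apply, Matrix.sub_apply]
      by_cases h : x.1 = y.1 <;> simp [h]
    rw [this, key, sub_self]
  · rw [hPtilde, hinv, Matrix.sub_mul, Matrix.mul_assoc, hMZ, Matrix.mul_zero, sub_zero, hPZ]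
end

section
/- Let M be a real symmetric n×n matrix and let H be a real n×n block-diagonal matrix (H = B_H). Then vecb(M·H·M) = (M*M)·vecb(H), where vecb(A) ∈ R^{n_1²+…+n_G²} stacks the column vectorizations vec(A_{[g,g]}) of the diagonal blocks of A, and M*M is the cluster Khatri–Rao product: the (Σ_g n_g²)×(Σ_g n_g²) block matrix whose (h,g) block is the Kronecker product M_{[h,g]} ⊗ M_{[h,g]}. -/
open Matrix BigOperators

/-- Index set for the stacked vectorizations of the diagonal blocks. -/
abbrev VecbIdx {G : ℕ} (ng : Fin G → ℕ) := Σ g : Fin G, Fin (ng g) × Fin (ng g)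

/-- `vecb(A)`: the stacked column vectorizations of the diagonal blocks of `A`. -/
def vecb {G : ℕ} {ng : Fin G → ℕ} (A : Matrix (ClusterIdx ng) (ClusterIdx ng) ℝ) :
    VecbIdx ng → ℝ :=
  fun q => A ⟨q.1, q.2.1⟩ ⟨q.1, q.2.2⟩

/-- The cluster Khatri–Rao product `M * M`: the block matrix whose `(h,g)` block is the
Kronecker product `M_{[h,g]} ⊗ M_{[h,g]}`. -/
def khatriRaoSq {G : ℕ} {ng : Fin G → ℕ} (M : Matrix (ClusterIdx ng) (ClusterIdx ng) ℝ) :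
    Matrix (VecbIdx ng) (VecbIdx ng) ℝ :=
  Matrix.of fun q r =>
    M ⟨q.1, q.2.1⟩ ⟨r.1, r.2.1⟩ * M ⟨q.1, q.2.2⟩ ⟨r.1, r.2.2⟩

/-- key identity of the many-controls cluster jackknife, Section 3.3.3:
for `M` symmetric and `H` block diagonal, `vecb(M H M) = (M * M) vecb(H)` where `M * M`
is the cluster Khatri–Rao product. -/
theorem vecb_conjugation_khatriRao
    {G : ℕ} (ng : Fin G → ℕ)
    (M H : Matrix (ClusterIdx ng) (ClusterIdx ng) ℝ)
    (hM : M.IsSymm) (hH : H = blockDiagPart H) :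
    vecb (M * H * M) = (khatriRaoSq M).mulVec (vecb H) := by
  have hMs : ∀ a b, M a b = M b a := fun a b => (hM.apply a b).symm
  have hsig : ∀ f : ClusterIdx ng → ℝ, ∑ x : ClusterIdx ng, f x = ∑ h, ∑ a, f ⟨h, a⟩ := by
    intro f; rw [← Finset.univ_sigma_univ, Finset.sum_sigma]
  have hsig2 : ∀ f : VecbIdx ng → ℝ, ∑ x : VecbIdx ng, f x = ∑ h, ∑ p : Fin (ng h) × Fin (ng h), f ⟨h, p⟩ := by
    intro f; rw [← Finset.univ_sigma_univ, Finset.sum_sigma]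
  funext q
  obtain ⟨g, i, j⟩ := q
  rw [hH]
  simp only [vecb, Matrix.mulVec, dotProduct, khatriRaoSq, Matrix.of_apply,
    Matrix.mul_apply, blockDiagPart, if_true]
  rw [hsig, hsig2]
  refine Finset.sum_congr rfl fun h' _ => ?_
  rw [Fintype.sum_prod_type_right]
  refine Finset.sum_congr rfl fun b _ => ?_
  simp only [mul_ite, mul_zero, Finset.sum_mul]
  rw [hsig]
  rw [Finset.sum_eq_single h' (fun h _ hne => by simp [hne]) (by simp)]
  simp only [if_pos rfl]
  refine Finset.sum_congr rfl fun a _ => ?_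
  rw [hMs ⟨h', b⟩ ⟨g, j⟩]
  simp only [if_true]; ring
end

section
/- Let M be a real symmetric n×n matrix and P any real n×n matrix. Suppose the cluster Khatri–Rao product M*M (the block matrix with (h,g) block M_{[h,g]} ⊗ M_{[h,g]}) is invertible, and let H be the block-diagonal n×n matrix determined by vecb(H) = (M*M)^{-1}·vecb(P). Then every diagonal block of P − M·H·M is zero, i.e. B_{P − MHM} = 0. -/
open Matrix BigOperators

/-- centering property of the many-controls cluster jackknife,
Section 3.3.3: if `M` is symmetric, the cluster Khatri–Rao product `M * M` is
invertible, and `H` is the block-diagonal matrix with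
`vecb(H) = (M * M)⁻¹ vecb(P)`, then `P − M H M` has zero block diagonal. -/
theorem many_controls_cluster_jackknife_centered
    {G : ℕ} (ng : Fin G → ℕ)
    (M P H : Matrix (ClusterIdx ng) (ClusterIdx ng) ℝ)
    (hM : M.IsSymm)
    (hKR : IsUnit (khatriRaoSq M))
    (hHblock : H = blockDiagPart H)
    (hHdef : vecb H = (khatriRaoSq M)⁻¹.mulVec (vecb P)) :
    blockDiagPart (P - M * H * M) = 0 := by
  have key : vecb (M * H * M) = (khatriRaoSq M).mulVec (vecb H) := by
    funext q
    obtain ⟨g, i, j⟩ := q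
    have hsplit : ∀ (f : ClusterIdx ng → ℝ),
        (∑ k : ClusterIdx ng, f k) = ∑ h : Fin G, ∑ a : Fin (ng h), f ⟨h, a⟩ := by
      intro f; rw [← Finset.univ_sigma_univ, Finset.sum_sigma]
    have hsplit2 : ∀ (f : VecbIdx ng → ℝ),
        (∑ r : VecbIdx ng, f r)
          = ∑ h : Fin G, ∑ p : Fin (ng h) × Fin (ng h), f ⟨h, p⟩ := by
      intro f; rw [← Finset.univ_sigma_univ, Finset.sum_sigma]
    show (M * H * M) ⟨g, i⟩ ⟨g, j⟩ = _
    rw [Matrix.mulVec]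
    simp only [Matrix.mul_apply, Finset.sum_mul, dotProduct, khatriRaoSq, vecb,
      Matrix.of_apply]
    rw [hsplit, hsplit2]
    refine Finset.sum_congr rfl fun h _ => ?_
    rw [Fintype.sum_prod_type]
    have lhs_eq : ∀ b : Fin (ng h),
        (∑ l : ClusterIdx ng, M ⟨g, i⟩ l * H l ⟨h, b⟩ * M ⟨h, b⟩ ⟨g, j⟩)
          = ∑ a : Fin (ng h), M ⟨g, i⟩ ⟨h, a⟩ * M ⟨g, j⟩ ⟨h, b⟩ * H ⟨h, a⟩ ⟨h, b⟩ := by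
      intro b
      rw [hsplit]
      rw [Finset.sum_eq_single h]
      · refine Finset.sum_congr rfl fun a _ => ?_
        rw [hM.apply ⟨g, j⟩ ⟨h, b⟩]
        ring
      · intro h1 _ hne
        refine Finset.sum_eq_zero fun a _ => ?_
        have hz : H ⟨h1, a⟩ ⟨h, b⟩ = 0 := by
          rw [hHblock]; simp [blockDiagPart, hne]
        rw [hz]; ring
      · intro habs; exact absurd (Finset.mem_univ h) habs
    calc (∑ b : Fin (ng h), ∑ l : ClusterIdx ng,
            M ⟨g, i⟩ l * H l ⟨h, b⟩ * M ⟨h, b⟩ ⟨g, j⟩)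
        = ∑ b : Fin (ng h), ∑ a : Fin (ng h),
            M ⟨g, i⟩ ⟨h, a⟩ * M ⟨g, j⟩ ⟨h, b⟩ * H ⟨h, a⟩ ⟨h, b⟩ :=
          Finset.sum_congr rfl fun b _ => lhs_eq b
      _ = ∑ a : Fin (ng h), ∑ b : Fin (ng h),
            M ⟨g, i⟩ ⟨h, a⟩ * M ⟨g, j⟩ ⟨h, b⟩ * H ⟨h, a⟩ ⟨h, b⟩ := Finset.sum_comm
  have hdet : IsUnit (khatriRaoSq M).det := (Matrix.isUnit_iff_isUnit_det _).mp hKR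
  have hP : (khatriRaoSq M).mulVec (vecb H) = vecb P := by
    rw [hHdef, Matrix.mulVec_mulVec, Matrix.mul_nonsing_inv _ hdet, Matrix.one_mulVec]
  have hvec : vecb (M * H * M) = vecb P := key.trans hP
  ext x y
  obtain ⟨g, i⟩ := x
  obtain ⟨g', j⟩ := y
  simp only [blockDiagPart, Matrix.of_apply, Matrix.zero_apply]
  split
  · next heq =>
    cases heq
    have := congrFun hvec ⟨g, (i, j)⟩
    simp only [vecb] at this
    simp [Matrix.sub_apply, this]
  · rfl
end

section
/- Let P be a real symmetric idempotent n×n matrix, suppose the largest eigenvalue of every diagonal block P_{[g,g]} is at most C, and let n_max = max_g n_g. Then Σ_{g≠h} ( tr(P_{[g,h]} P_{[h,g]}) )² ≤ C·n_max·tr(P). -/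
/-!
Write `t g h = tr(P_{[g,h]} P_{[h,g]})`. By symmetry `P_{[h,g]} = P_{[g,h]}ᵀ`, so `t g h ≥ 0`, and by
idempotence `∑ h, t g h = tr P_{[g,g]}`, which the eigenvalue bound caps at `n_g C ≤ n_max C`.
Hence `∑_{h ≠ g} (t g h)² ≤ (tr P_{[g,g]})² ≤ C n_max tr P_{[g,g]}`, and summing over `g` gives
`C n_max tr P`.
-/

open Matrix BigOperators

namespace Matrix

lemma IsHermitian.trace_le_card_mul {m : Type*} [Fintype m] [DecidableEq m]
    {A : Matrix m m ℝ} (hA : A.IsHermitian) {C : ℝ} (hC : ∀ i, hA.eigenvalues i ≤ C) :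
    A.trace ≤ Fintype.card m * C := by
  rw [hA.trace_eq_sum_eigenvalues]
  simpa using Finset.sum_le_sum fun i (_ : i ∈ Finset.univ) => hC i

end Matrix

section ClusterBlocks

variable {G : ℕ} {ng : Fin G → ℕ}

lemma trace_eq_sum_trace_clusterSub (A : Matrix (ClusterIdx ng) (ClusterIdx ng) ℝ) :
    A.trace = ∑ g, (clusterSub A g g).trace :=
  Fintype.sum_sigma _

lemma clusterSub_mul (A B : Matrix (ClusterIdx ng) (ClusterIdx ng) ℝ) (g g' : Fin G) :
    clusterSub (A * B) g g' = ∑ h, clusterSub A g h * clusterSub B h g' := by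
  ext i j
  simp only [clusterSub, of_apply, mul_apply, Matrix.sum_apply, Fintype.sum_sigma]

lemma clusterSub_transpose_of_isSymm {A : Matrix (ClusterIdx ng) (ClusterIdx ng) ℝ}
    (hA : A.IsSymm) (g h : Fin G) : (clusterSub A g h)ᵀ = clusterSub A h g := by
  ext i j
  exact hA.apply _ _

lemma trace_clusterSub_mul_clusterSub_nonneg {A : Matrix (ClusterIdx ng) (ClusterIdx ng) ℝ}
    (hA : A.IsSymm) (g h : Fin G) : 0 ≤ (clusterSub A g h * clusterSub A h g).trace := by
  rw [← clusterSub_transpose_of_isSymm hA g h]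
  exact (posSemidef_self_mul_conjTranspose _).trace_nonneg

lemma trace_clusterSub_of_idempotent {P : Matrix (ClusterIdx ng) (ClusterIdx ng) ℝ}
    (hP : P * P = P) (g : Fin G) :
    (clusterSub P g g).trace = ∑ h, (clusterSub P g h * clusterSub P h g).trace := by
  rw [← trace_sum, ← clusterSub_mul, hP]

end ClusterBlocks

lemma sum_offdiag_sq_le_sum_sq_sum {ι : Type*} [Fintype ι] [DecidableEq ι] {t : ι → ι → ℝ}
    (ht : ∀ g h, 0 ≤ t g h) :
    ∑ g, ∑ h, (if g = h then 0 else t g h ^ 2) ≤ ∑ g, (∑ h, t g h) ^ 2 := by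
  gcongr with g
  calc ∑ h, (if g = h then 0 else t g h ^ 2) ≤ ∑ h, t g h ^ 2 := by
        gcongr with h
        split_ifs
        · positivity
        · rfl
    _ ≤ (∑ h, t g h) ^ 2 := Finset.sum_sq_le_sq_sum_of_nonneg fun h _ => ht g h

lemma sq_le_mul_mul_of_le_mul {d k m C : ℝ} (hd : 0 ≤ d) (hk : 0 ≤ k) (hdk : d ≤ k * C)
    (hkm : k ≤ m) : d ^ 2 ≤ d * (C * m) := by
  rcases hd.eq_or_lt with rfl | hd
  · simp
  have hC : 0 < C := pos_of_mul_pos_right (hd.trans_le hdk) hk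
  calc d ^ 2 ≤ d * (k * C) := by rw [sq]; gcongr
    _ ≤ d * (C * m) := by rw [mul_comm k]; gcongr

/-- final bound in the Lyapunov step of the proof of Theorem 2:
if `P` is symmetric idempotent, every diagonal block `P_{[g,g]}` has all eigenvalues
at most `C`, and `n_max = max_g n_g`, then
`∑_{g≠h} (tr(P_{[g,h]} P_{[h,g]}))² ≤ C · n_max · tr(P)`. -/
theorem sum_sq_offdiag_trace_le
    {G : ℕ} (ng : Fin G → ℕ)
    (P : Matrix (ClusterIdx ng) (ClusterIdx ng) ℝ)
    (hPsymm : P.IsSymm) (hPidem : P * P = P)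
    (C : ℝ)
    (hblock : ∀ g : Fin G, (clusterSub P g g).IsHermitian)
    (hCbound : ∀ (g : Fin G) (i : Fin (ng g)), (hblock g).eigenvalues i ≤ C)
    (nmax : ℕ) (hnmax : nmax = Finset.univ.sup ng) :
    ∑ g : Fin G, ∑ h : Fin G, (if g = h then 0 else
        ((clusterSub P g h * clusterSub P h g).trace) ^ 2) ≤
      C * (nmax : ℝ) * P.trace := by
  have hdiag_le (g : Fin G) : (clusterSub P g g).trace ^ 2 ≤
      (clusterSub P g g).trace * (C * nmax) := by
    refine sq_le_mul_mul_of_le_mul (k := ng g) ?_ (Nat.cast_nonneg _) ?_ ?_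
    · rw [trace_clusterSub_of_idempotent hPidem]
      exact Finset.sum_nonneg fun h _ => trace_clusterSub_mul_clusterSub_nonneg hPsymm g h
    · simpa using (hblock g).trace_le_card_mul (hCbound g)
    · exact_mod_cast hnmax ▸ Finset.le_sup (Finset.mem_univ g)
  calc _ ≤ ∑ g, (∑ h, (clusterSub P g h * clusterSub P h g).trace) ^ 2 :=
        sum_offdiag_sq_le_sum_sq_sum (trace_clusterSub_mul_clusterSub_nonneg hPsymm)
    _ = ∑ g, (clusterSub P g g).trace ^ 2 := by
        simp only [trace_clusterSub_of_idempotent hPidem]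
    _ ≤ ∑ g, (clusterSub P g g).trace * (C * nmax) := Finset.sum_le_sum fun g _ => hdiag_le g
    _ = C * nmax * P.trace := by
        rw [← Finset.sum_mul, ← trace_eq_sum_trace_clusterSub, mul_comm]
end
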